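/- Let ε = 1 or ε = -1, let b₁, b₀, c₂, c₁ : ℝ → ℝ be smooth, and let ξ, η : ℝ → ℝ be smooth. Then the Lie bracket of the vector fields X(ξ) and Y(η) on ℝ⁴ is identically zero: [X(ξ), Y(η)] = 0. -/

import Mathlib

/-- Lie bracket of vector fields on `ℝ⁴`, identified with smooth maps `ℝ⁴ → ℝ⁴`:
`[V,W](p) = DW(p)(V(p)) − DV(p)(W(p))`. -/
noncomputable def VBracket (V W : ℝ × ℝ × ℝ × ℝ → ℝ × ℝ × ℝ × ℝ) :
    ℝ × ℝ × ℝ × ℝ → ℝ × ℝ × ℝ × ℝ :=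
  fun p => fderiv ℝ W p (V p) - fderiv ℝ V p (W p)

/-- The vector field `X(ξ) = ξ(t)∂x + ξ'(t)∂u` in coordinates `(x,y,t,u)`. -/
noncomputable def Xfield (ξ : ℝ → ℝ) : ℝ × ℝ × ℝ × ℝ → ℝ × ℝ × ℝ × ℝ :=
  fun p => (ξ p.2.2.1, 0, 0, deriv ξ p.2.2.1)

/-- The vector field `Y(η)` of Theorem 2 in coordinates `(x,y,t,u)`. -/
noncomputable def Yfield (ε : ℝ) (b₁ b₀ c₂ c₁ : ℝ → ℝ) (η : ℝ → ℝ) :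
    ℝ × ℝ × ℝ × ℝ → ℝ × ℝ × ℝ × ℝ :=
  fun p =>
    (ε / 2 * (b₁ p.2.2.1 * η p.2.2.1 - deriv η p.2.2.1) * p.2.1,
     η p.2.2.1,
     0,
     (-2 * c₂ p.2.2.1 * η p.2.2.1
        + ε / 2 * (deriv b₁ p.2.2.1 * η p.2.2.1 + (b₁ p.2.2.1) ^ 2 * η p.2.2.1
            - deriv (deriv η) p.2.2.1)) * p.2.1
       - c₁ p.2.2.1 * η p.2.2.1
       + ε / 2 * b₀ p.2.2.1 * (b₁ p.2.2.1 * η p.2.2.1 - deriv η p.2.2.1))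

/-! Both fields are translation invariant along the other one: `X(ξ)` points in the `x`, `u`
directions, on which `Y(η)` does not depend, and `Y(η)` has no `t`-component, while `X(ξ)`
depends on `t` alone. A map constant along a line has zero derivative in its direction, so both
terms of the bracket vanish. -/

theorem fderiv_apply_eq_zero_of_forall_add_smul {𝕜 E F : Type*} [NontriviallyNormedField 𝕜]
    [NormedAddCommGroup E] [NormedSpace 𝕜 E] [NormedAddCommGroup F] [NormedSpace 𝕜 F]
    {f : E → F} {x v : E} (h : ∀ s : 𝕜, f (x + s • v) = f x) : fderiv 𝕜 f x v = 0 := by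
  by_cases hf : DifferentiableAt 𝕜 f x
  · rw [← hf.lineDeriv_eq_fderiv, lineDeriv, funext h, deriv_const]
  · rw [fderiv_zero_of_not_differentiableAt hf, zero_apply]

theorem Xfield_add (ξ : ℝ → ℝ) (p v : ℝ × ℝ × ℝ × ℝ) (hv : v.2.2.1 = 0) :
    Xfield ξ (p + v) = Xfield ξ p := by
  simp [Xfield, hv]

theorem Yfield_add (ε : ℝ) (b₁ b₀ c₂ c₁ η : ℝ → ℝ) (p v : ℝ × ℝ × ℝ × ℝ)
    (hy : v.2.1 = 0) (ht : v.2.2.1 = 0) :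
    Yfield ε b₁ b₀ c₂ c₁ η (p + v) = Yfield ε b₁ b₀ c₂ c₁ η p := by
  simp [Yfield, hy, ht]

theorem stmt4_general (ε : ℝ)
    (b₁ b₀ c₂ c₁ : ℝ → ℝ)
    (ξ η : ℝ → ℝ) :
    VBracket (Xfield ξ) (Yfield ε b₁ b₀ c₂ c₁ η) = fun _ => (0 : ℝ × ℝ × ℝ × ℝ) := by
  funext p
  have hY : fderiv ℝ (Yfield ε b₁ b₀ c₂ c₁ η) p (Xfield ξ p) = 0 :=
    fderiv_apply_eq_zero_of_forall_add_smul fun _ =>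
      Yfield_add ε b₁ b₀ c₂ c₁ η p _ (by simp [Xfield]) (by simp [Xfield])
  have hX : fderiv ℝ (Xfield ξ) p (Yfield ε b₁ b₀ c₂ c₁ η p) = 0 :=
    fderiv_apply_eq_zero_of_forall_add_smul fun _ => Xfield_add ξ p _ (by simp [Yfield])
  rw [VBracket, hY, hX, sub_zero]

theorem stmt4 (ε : ℝ) (hε : ε = 1 ∨ ε = -1)
    (b₁ b₀ c₂ c₁ : ℝ → ℝ)
    (hb₁ : ContDiff ℝ (⊤ : ℕ∞) b₁) (hb₀ : ContDiff ℝ (⊤ : ℕ∞) b₀)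
    (hc₂ : ContDiff ℝ (⊤ : ℕ∞) c₂) (hc₁ : ContDiff ℝ (⊤ : ℕ∞) c₁)
    (ξ η : ℝ → ℝ)
    (hξ : ContDiff ℝ (⊤ : ℕ∞) ξ) (hη : ContDiff ℝ (⊤ : ℕ∞) η) :
    VBracket (Xfield ξ) (Yfield ε b₁ b₀ c₂ c₁ η) = fun _ => (0 : ℝ × ℝ × ℝ × ℝ) :=
  stmt4_general ε b₁ b₀ c₂ c₁ ξ η
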